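/- For 3 ≤ r ≤ 8 and any twisted cubic C in Λ_r, the number of exceptional classes E with ⟨C, E⟩ = 0 is exactly r; equivalently, the number of pairs (Q, E) with Q a conic, E an exceptional class, and Q + E = C is exactly r. -/

import Mathlib

/-- The intersection pairing on the Picard lattice `Λ_r = ℤ^(r+1)`:
`⟨x, y⟩ = x₀y₀ − x₁y₁ − ⋯ − x_r y_r`. -/
def pair {r : ℕ} (x y : Fin (r + 1) → ℤ) : ℤ :=
  x 0 * y 0 - ∑ i : Fin r, x i.succ * y i.succ

/-- The canonical class `K_r = (−3, 1, …, 1)`. -/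
def Kc (r : ℕ) : Fin (r + 1) → ℤ := fun i => if i = 0 then -3 else 1

/-- Exceptional classes (classes of `(−1)`-curves). -/
def Exceptional {r : ℕ} (E : Fin (r + 1) → ℤ) : Prop :=
  pair E E = -1 ∧ pair (Kc r) E = -1

/-- Nef classes: nonnegative pairing with every exceptional class. -/
def Nef {r : ℕ} (D : Fin (r + 1) → ℤ) : Prop :=
  ∀ E : Fin (r + 1) → ℤ, Exceptional E → 0 ≤ pair D E

/-- Conics: nef classes `Q` with `⟨Q,Q⟩ = 0` and `⟨K,Q⟩ = −2`. -/
def Conic {r : ℕ} (Q : Fin (r + 1) → ℤ) : Prop :=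
  Nef Q ∧ pair Q Q = 0 ∧ pair (Kc r) Q = -2

/-- Twisted cubics: nef classes `C` with `⟨C,C⟩ = 1` and `⟨K,C⟩ = −3`. -/
def TwistedCubic {r : ℕ} (C : Fin (r + 1) → ℤ) : Prop :=
  Nef C ∧ pair C C = 1 ∧ pair (Kc r) C = -3

/-!
The reflection `x ↦ x + ⟨x, c⟩ c` in a root `c = L - E_i - E_j - E_k` (a quadratic Cremona
transformation) is an involutive isometry of `Λ_r` fixing `K_r`, so it permutes the exceptional
classes and preserves nefness and twisted cubics. For a twisted cubic `C = a L - ∑ mᵢ Eᵢ`,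
nefness gives `mᵢ = ⟨C, Eᵢ⟩ ≥ 0`, and `∑ mᵢ = 3a - 3`, `∑ mᵢ² = a² - 1`, `r ≤ 8` force three
multiplicities with `mᵢ + mⱼ + mₖ > a` as soon as `a ≥ 2` (Noether's inequality); reflecting in
`L - Eᵢ - Eⱼ - Eₖ` lowers the degree `a`. So every twisted cubic is carried to the line class `L`,
where the exceptional classes orthogonal to `L` are `E₁, …, E_r` and each `L - Eᵢ` is nef by
Cauchy–Schwarz. Finally, `Q + E = C` with `Q` a conic forces `⟨Q, E⟩ = 1`, hence `⟨C, E⟩ = 0`,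
and conversely `C - E` is a conic whenever `⟨C, E⟩ = 0`.
-/

abbrev Λ (r : ℕ) := Fin (r + 1) → ℤ

section

variable {r : ℕ}

section Pairing

lemma pair_comm (x y : Λ r) : pair x y = pair y x := by
  simp only [pair, mul_comm]

lemma pair_add_left (x y z : Λ r) : pair (x + y) z = pair x z + pair y z := by
  simp only [pair, Pi.add_apply, add_mul, Finset.sum_add_distrib]; ring

lemma pair_sub_left (x y z : Λ r) : pair (x - y) z = pair x z - pair y z := by
  simp only [pair, Pi.sub_apply, sub_mul, Finset.sum_sub_distrib]; ring

lemma pair_smul_left (c : ℤ) (x z : Λ r) : pair (c • x) z = c * pair x z := by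
  simp only [pair, Pi.smul_apply, smul_eq_mul, mul_assoc, ← Finset.mul_sum]; ring

lemma pair_add_right (x y z : Λ r) : pair z (x + y) = pair z x + pair z y := by
  rw [pair_comm, pair_add_left, pair_comm x, pair_comm y]

lemma pair_sub_right (x y z : Λ r) : pair z (x - y) = pair z x - pair z y := by
  rw [pair_comm, pair_sub_left, pair_comm x, pair_comm y]

lemma pair_smul_right (c : ℤ) (x z : Λ r) : pair z (c • x) = c * pair z x := by
  rw [pair_comm, pair_smul_left, pair_comm]

lemma pair_self (x : Λ r) : pair x x = x 0 ^ 2 - ∑ i : Fin r, x i.succ ^ 2 := by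
  simp only [pair, sq]

lemma pair_Kc_left (x : Λ r) : pair (Kc r) x = -3 * x 0 - ∑ i : Fin r, x i.succ := by
  simp [pair, Kc, Fin.succ_ne_zero]

end Pairing

def lineClass (r : ℕ) : Λ r := Pi.single 0 1

def blowupClass (i : Fin r) : Λ r := Pi.single i.succ 1

lemma pair_lineClass_left (x : Λ r) : pair (lineClass r) x = x 0 := by
  simp [pair, lineClass, Fin.succ_ne_zero]

lemma pair_blowupClass_left (i : Fin r) (x : Λ r) : pair (blowupClass i) x = -x i.succ := by
  simp [pair, blowupClass, Pi.single_apply, Fin.succ_inj, (Fin.succ_ne_zero i).symm]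

lemma blowupClass_exceptional (i : Fin r) : Exceptional (blowupClass i) := by
  refine ⟨?_, ?_⟩
  · rw [pair_blowupClass_left]; simp [blowupClass]
  · rw [pair_Kc_left]; simp [blowupClass, Pi.single_apply, Fin.succ_inj, (Fin.succ_ne_zero i).symm]

lemma blowupClass_injective : Function.Injective (blowupClass (r := r)) := by
  intro i j h
  simpa [blowupClass, Pi.single_apply, Fin.succ_inj, eq_comm] using congrFun h i.succ

section Coordinates

variable {D E : Λ r}

lemma Exceptional.sum_succ (hE : Exceptional E) : ∑ i : Fin r, E i.succ = 1 - 3 * E 0 := by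
  have := hE.2; rw [pair_Kc_left] at this; linarith

lemma Exceptional.sum_succ_sq (hE : Exceptional E) : ∑ i : Fin r, E i.succ ^ 2 = E 0 ^ 2 + 1 := by
  have := hE.1; rw [pair_self] at this; linarith

lemma TwistedCubic.sum_succ (hD : TwistedCubic D) : ∑ i : Fin r, D i.succ = 3 - 3 * D 0 := by
  have := hD.2.2; rw [pair_Kc_left] at this; linarith

lemma TwistedCubic.sum_succ_sq (hD : TwistedCubic D) : ∑ i : Fin r, D i.succ ^ 2 = D 0 ^ 2 - 1 := by
  have := hD.2.1; rw [pair_self] at this; linarith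

lemma TwistedCubic.succ_nonpos (hD : TwistedCubic D) (i : Fin r) : D i.succ ≤ 0 := by
  have := hD.1 _ (blowupClass_exceptional i)
  rw [pair_comm, pair_blowupClass_left] at this
  linarith

end Coordinates

def orthExceptional (D : Λ r) : Set (Λ r) := {E | Exceptional E ∧ pair D E = 0}

def reflect (c x : Λ r) : Λ r := x + pair x c • c

section Reflection

variable {c D E : Λ r}

lemma pair_reflect_left (x y : Λ r) : pair (reflect c x) y = pair x (reflect c y) := by
  simp only [reflect, pair_add_left, pair_add_right, pair_smul_left, pair_smul_right, pair_comm c]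
  ring

lemma reflect_sub (x y : Λ r) : reflect c (x - y) = reflect c x - reflect c y := by
  simp only [reflect, pair_sub_left, sub_smul]
  abel

lemma reflect_reflect (hc : pair c c = -2) (x : Λ r) : reflect c (reflect c x) = x := by
  simp only [reflect, pair_add_left, pair_smul_left, hc]
  module

lemma reflect_involutive (hc : pair c c = -2) : Function.Involutive (reflect c) :=
  reflect_reflect hc

lemma pair_reflect_reflect (hc : pair c c = -2) (x y : Λ r) :
    pair (reflect c x) (reflect c y) = pair x y := by
  rw [pair_reflect_left, reflect_reflect hc]

lemma reflect_Kc (hK : pair (Kc r) c = 0) : reflect c (Kc r) = Kc r := by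
  simp [reflect, hK]

lemma exceptional_reflect (hc : pair c c = -2) (hK : pair (Kc r) c = 0) (hE : Exceptional E) :
    Exceptional (reflect c E) := by
  refine ⟨?_, ?_⟩
  · rw [pair_reflect_reflect hc]; exact hE.1
  · rw [← reflect_Kc hK, pair_reflect_reflect hc]; exact hE.2

lemma nef_reflect (hc : pair c c = -2) (hK : pair (Kc r) c = 0) (hD : Nef D) :
    Nef (reflect c D) := fun F hF => by
  rw [pair_reflect_left]
  exact hD _ (exceptional_reflect hc hK hF)

lemma twistedCubic_reflect (hc : pair c c = -2) (hK : pair (Kc r) c = 0)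
    (hD : TwistedCubic D) : TwistedCubic (reflect c D) := by
  refine ⟨nef_reflect hc hK hD.1, ?_, ?_⟩
  · rw [pair_reflect_reflect hc]; exact hD.2.1
  · rw [← reflect_Kc hK, pair_reflect_reflect hc]; exact hD.2.2

lemma orthExceptional_reflect (hc : pair c c = -2) (hK : pair (Kc r) c = 0) :
    orthExceptional (reflect c D) = reflect c '' orthExceptional D := by
  rw [Set.image_eq_preimage_of_inverse (reflect_involutive hc) (reflect_involutive hc)]
  ext E
  refine ⟨fun ⟨hE, hDE⟩ => ⟨exceptional_reflect hc hK hE, ?_⟩, fun ⟨hE, hDE⟩ => ⟨?_, ?_⟩⟩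
  · rwa [← pair_reflect_left]
  · simpa only [reflect_reflect hc] using exceptional_reflect hc hK hE
  · rwa [pair_reflect_left]

end Reflection

lemma exists_eq_single_of_sum_eq_one_of_sum_sq_eq_one {ι : Type*} [Fintype ι] [DecidableEq ι]
    {f : ι → ℤ} (h1 : ∑ i, f i = 1) (h2 : ∑ i, f i ^ 2 = 1) : ∃ i, f = Pi.single i 1 := by
  have hnonneg : ∀ i ∈ Finset.univ, 0 ≤ f i ^ 2 - f i := fun i _ => by
    have := Int.le_self_sq (f i); linarith
  have h01 : ∀ i, f i = 0 ∨ f i = 1 := fun i => by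
    have h : ∑ i, (f i ^ 2 - f i) = 0 := by rw [Finset.sum_sub_distrib, h1, h2, sub_self]
    have h : f i * (f i - 1) = 0 := by
      linear_combination (Finset.sum_eq_zero_iff_of_nonneg hnonneg).1 h i (Finset.mem_univ i)
    exact (mul_eq_zero.1 h).imp_right sub_eq_zero.1
  obtain ⟨i, hi⟩ : ∃ i, f i = 1 := by
    by_contra! h
    have := Finset.sum_eq_zero fun j (_ : j ∈ Finset.univ) => (h01 j).resolve_right (h j)
    omega
  have hrest : ∑ j ∈ Finset.univ.erase i, f j = 0 := by
    rw [Finset.sum_erase_eq_sub (Finset.mem_univ i), h1, hi, sub_self]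
  refine ⟨i, funext fun j => ?_⟩
  rcases eq_or_ne j i with rfl | hji
  · simp [hi]
  · rw [Pi.single_eq_of_ne hji]
    refine (Finset.sum_eq_zero_iff_of_nonneg fun l _ => ?_).1 hrest j (by simp [hji])
    rcases h01 l with h | h <;> omega

lemma orthExceptional_lineClass : orthExceptional (lineClass r) = Set.range blowupClass := by
  ext E
  constructor
  · rintro ⟨hE, hLE⟩
    rw [pair_lineClass_left] at hLE
    obtain ⟨i, hi⟩ :=
      exists_eq_single_of_sum_eq_one_of_sum_sq_eq_one (f := fun i : Fin r => E i.succ)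
      (by simpa [hLE] using hE.sum_succ) (by simpa [hLE] using hE.sum_succ_sq)
    refine ⟨i, funext fun l => Fin.cases ?_ (fun j => ?_) l⟩
    · simp [blowupClass, hLE, (Fin.succ_ne_zero i).symm]
    · simpa [blowupClass, Pi.single_apply, Fin.succ_inj] using (congrFun hi j).symm
  · rintro ⟨i, rfl⟩
    refine ⟨blowupClass_exceptional i, ?_⟩
    rw [pair_lineClass_left]
    simp [blowupClass, (Fin.succ_ne_zero i).symm]

lemma ncard_orthExceptional_lineClass : (orthExceptional (lineClass r)).ncard = r := by
  rw [orthExceptional_lineClass, Set.ncard_range_of_injective blowupClass_injective,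
    Nat.card_eq_fintype_card, Fintype.card_fin]

lemma Exceptional.zero_add_succ_nonneg {F : Λ r} (h8 : r ≤ 8) (hF : Exceptional F) (i : Fin r) :
    0 ≤ F 0 + F i.succ := by
  have hsum := Finset.sum_erase_eq_sub (f := fun l => F (Fin.succ l)) (Finset.mem_univ i)
  have hsq := Finset.sum_erase_eq_sub (f := fun l => F (Fin.succ l) ^ 2) (Finset.mem_univ i)
  rw [hF.sum_succ] at hsum
  rw [hF.sum_succ_sq] at hsq
  have hcard : ((Finset.univ.erase i).card : ℤ) ≤ 7 := by
    rw [Finset.card_erase_of_mem (Finset.mem_univ i), Finset.card_univ, Fintype.card_fin]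
    omega
  have hsq_nonneg : 0 ≤ ∑ l ∈ Finset.univ.erase i, F l.succ ^ 2 :=
    Finset.sum_nonneg fun l _ => sq_nonneg _
  have hCS : (1 - 3 * F 0 - F i.succ) ^ 2 ≤ 7 * (F 0 ^ 2 + 1 - F i.succ ^ 2) := by
    rw [← hsum, ← hsq]
    exact sq_sum_le_card_mul_sum_sq.trans (mul_le_mul_of_nonneg_right hcard hsq_nonneg)
  by_contra! hneg
  nlinarith [sq_nonneg (2 * F 0 + F i.succ), sq_nonneg (F 0 + F i.succ + 1)]

lemma nef_lineClass_sub_blowupClass (h8 : r ≤ 8) (i : Fin r) :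
    Nef (lineClass r - blowupClass i) := fun F hF => by
  rw [pair_sub_left, pair_lineClass_left, pair_blowupClass_left, sub_neg_eq_add]
  exact hF.zero_add_succ_nonneg h8 i

lemma exists_top_three {ι α : Type*} [Fintype ι] [DecidableEq ι] [LinearOrder α] (m : ι → α)
    (h3 : 3 ≤ Fintype.card ι) :
    ∃ i j k, j ≠ i ∧ k ≠ i ∧ k ≠ j ∧ m j ≤ m i ∧ m k ≤ m j ∧
      ∀ l ∈ ((Finset.univ.erase i).erase j).erase k, m l ≤ m k := by
  obtain ⟨i, -, hi⟩ := Finset.exists_max_image Finset.univ m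
    (Finset.card_pos.1 (by rw [Finset.card_univ]; omega))
  obtain ⟨j, hj, hj'⟩ := Finset.exists_max_image (Finset.univ.erase i) m
    (Finset.card_pos.1 (by rw [Finset.card_erase_of_mem (Finset.mem_univ i)]; simp; omega))
  obtain ⟨k, hk, hk'⟩ := Finset.exists_max_image ((Finset.univ.erase i).erase j) m
    (Finset.card_pos.1 (by
      rw [Finset.card_erase_of_mem hj, Finset.card_erase_of_mem (Finset.mem_univ i)]; simp; omega))
  exact ⟨i, j, k, Finset.ne_of_mem_erase hj,
    Finset.ne_of_mem_erase (Finset.mem_of_mem_erase hk), Finset.ne_of_mem_erase hk,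
    hi j (Finset.mem_univ j), hj' k (Finset.mem_of_mem_erase hk),
    fun l hl => hk' l (Finset.mem_of_mem_erase hl)⟩

lemma exists_three_sum_gt {a : ℤ} {m : Fin r → ℤ} (h3 : 3 ≤ r) (h8 : r ≤ 8) (hm : ∀ i, 0 ≤ m i)
    (ha : 2 ≤ a) (hsum : ∑ i, m i = 3 * a - 3) (hsq : ∑ i, m i ^ 2 = a ^ 2 - 1) :
    ∃ i j k, j ≠ i ∧ k ≠ i ∧ k ≠ j ∧ a < m i + m j + m k := by
  obtain ⟨i, j, k, hji, hki, hkj, hij, hjk, hU⟩ := exists_top_three m (by simpa using h3)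
  refine ⟨i, j, k, hji, hki, hkj, ?_⟩
  by_contra! hle
  set U := ((Finset.univ.erase i).erase j).erase k
  have hj : j ∈ Finset.univ.erase i := Finset.mem_erase.2 ⟨hji, Finset.mem_univ j⟩
  have hk : k ∈ (Finset.univ.erase i).erase j :=
    Finset.mem_erase.2 ⟨hkj, Finset.mem_erase.2 ⟨hki, Finset.mem_univ k⟩⟩
  have hsumU : ∑ l ∈ U, m l = 3 * a - 3 - m i - m j - m k := by
    rw [Finset.sum_erase_eq_sub hk, Finset.sum_erase_eq_sub hj,
      Finset.sum_erase_eq_sub (Finset.mem_univ i), hsum]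
  have hsqU : ∑ l ∈ U, m l ^ 2 = a ^ 2 - 1 - m i ^ 2 - m j ^ 2 - m k ^ 2 := by
    rw [Finset.sum_erase_eq_sub hk, Finset.sum_erase_eq_sub hj,
      Finset.sum_erase_eq_sub (Finset.mem_univ i), hsq]
  -- This is where `r ≤ 8` enters: `U` has at most five elements, which forces `1 ≤ m k`.
  have hcardU : (U.card : ℤ) ≤ 5 := by
    rw [Finset.card_erase_of_mem hk, Finset.card_erase_of_mem hj,
      Finset.card_erase_of_mem (Finset.mem_univ i), Finset.card_univ, Fintype.card_fin]
    omega
  have hsumU_le : ∑ l ∈ U, m l ≤ 5 * m k := calc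
    _ ≤ ∑ _l ∈ U, m k := Finset.sum_le_sum hU
    _ = U.card * m k := by rw [Finset.sum_const, nsmul_eq_mul]
    _ ≤ 5 * m k := mul_le_mul_of_nonneg_right hcardU (hm k)
  have hsqU_le : ∑ l ∈ U, m l ^ 2 ≤ m k * ∑ l ∈ U, m l := by
    rw [Finset.mul_sum]
    exact Finset.sum_le_sum fun l hl => by nlinarith [hU l hl, hm l]
  rw [hsumU] at hsumU_le
  rw [hsqU, hsumU] at hsqU_le
  have hi_le : m i * m i ≤ (m i + m j - m k) * m i :=
    mul_le_mul_of_nonneg_right (by omega) (hm i)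
  have hj_le : m j * m j ≤ (m i + m j - m k) * m j :=
    mul_le_mul_of_nonneg_right (by omega) (hm j)
  nlinarith [mul_nonneg (by omega : 0 ≤ a - (m i + m j + m k))
      (by omega : 0 ≤ a + (m i + m j + m k) - 4 * m k),
    mul_nonneg (hm k) (by omega : 0 ≤ a - 3 * m k)]

def cremonaRoot (i j k : Fin r) : Λ r :=
  lineClass r - blowupClass i - blowupClass j - blowupClass k

section CremonaRoot

variable {i j k : Fin r}

lemma pair_cremonaRoot_right (x : Λ r) :
    pair x (cremonaRoot i j k) = x 0 + x i.succ + x j.succ + x k.succ := by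
  rw [pair_comm]
  simp only [cremonaRoot, pair_sub_left, pair_lineClass_left, pair_blowupClass_left]
  ring

lemma cremonaRoot_zero : cremonaRoot i j k 0 = 1 := by
  simp [cremonaRoot, lineClass, blowupClass, (Fin.succ_ne_zero _).symm]

lemma pair_cremonaRoot_self (hji : j ≠ i) (hki : k ≠ i) (hkj : k ≠ j) :
    pair (cremonaRoot i j k) (cremonaRoot i j k) = -2 := by
  rw [pair_cremonaRoot_right, cremonaRoot_zero]
  simp [cremonaRoot, lineClass, blowupClass, Fin.succ_inj, Fin.succ_ne_zero,
    hji, hki, hkj, hji.symm, hki.symm, hkj.symm]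

lemma pair_Kc_cremonaRoot : pair (Kc r) (cremonaRoot i j k) = 0 := by
  rw [pair_cremonaRoot_right]
  simp [Kc, Fin.succ_ne_zero]

end CremonaRoot

section Descent

variable {D : Λ r}

lemma TwistedCubic.one_le (hD : TwistedCubic D) : 1 ≤ D 0 := by
  have := Finset.sum_nonpos fun i (_ : i ∈ Finset.univ) => hD.succ_nonpos i
  rw [hD.sum_succ] at this
  omega

lemma TwistedCubic.eq_lineClass (hD : TwistedCubic D) (h : D 0 = 1) : D = lineClass r := by
  have hsq : ∑ i : Fin r, D i.succ ^ 2 = 0 := by rw [hD.sum_succ_sq, h]; norm_num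
  funext l
  refine Fin.cases ?_ (fun i => ?_) l
  · simp [lineClass, h]
  · have := (Finset.sum_eq_zero_iff_of_nonneg fun i _ => sq_nonneg _).1 hsq i (Finset.mem_univ i)
    simpa [lineClass, (Fin.succ_ne_zero i)] using this

lemma TwistedCubic.exists_reflect_lt (h3 : 3 ≤ r) (h8 : r ≤ 8) (hD : TwistedCubic D)
    (h2 : 2 ≤ D 0) : ∃ c, pair c c = -2 ∧ pair (Kc r) c = 0 ∧ reflect c D 0 < D 0 := by
  obtain ⟨i, j, k, hji, hki, hkj, hlt⟩ := exists_three_sum_gt (m := fun i => -D i.succ) h3 h8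
    (fun i => neg_nonneg.2 (hD.succ_nonpos i)) h2
    (by rw [Finset.sum_neg_distrib, hD.sum_succ]; ring) (by simp only [neg_sq, hD.sum_succ_sq])
  refine ⟨cremonaRoot i j k, pair_cremonaRoot_self hji hki hkj, pair_Kc_cremonaRoot, ?_⟩
  simp only [reflect, Pi.add_apply, Pi.smul_apply, smul_eq_mul, cremonaRoot_zero,
    pair_cremonaRoot_right]
  linarith

theorem TwistedCubic.induction_on (h3 : 3 ≤ r) (h8 : r ≤ 8) {P : Λ r → Prop}
    (line : P (lineClass r))
    (step : ∀ c D, pair c c = -2 → pair (Kc r) c = 0 → P D → P (reflect c D))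
    (hD : TwistedCubic D) : P D := by
  induction hn : (D 0).toNat using Nat.strong_induction_on generalizing D with
  | _ n ih =>
    rcases hD.one_le.eq_or_lt with h | h
    · rwa [hD.eq_lineClass h.symm]
    obtain ⟨c, hc, hK, hlt⟩ := hD.exists_reflect_lt h3 h8 h
    have hD' := twistedCubic_reflect hc hK hD
    rw [← reflect_reflect hc D]
    exact step c _ hc hK (ih _ (by have := hD'.one_le; omega) hD' rfl)

end Descent

lemma conicDecompositions_eq_image {C : Λ r} (hC : TwistedCubic C)
    (hnef : ∀ E ∈ orthExceptional C, Nef (C - E)) :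
    {p : Λ r × Λ r | Conic p.1 ∧ Exceptional p.2 ∧ p.1 + p.2 = C} =
      (fun E => (C - E, E)) '' orthExceptional C := by
  ext ⟨Q, E⟩
  simp only [Set.mem_ofPred_eq, Set.mem_image, Prod.mk.injEq]
  constructor
  · rintro ⟨hQ, hE, rfl⟩
    have hQE : pair Q E = 1 := by
      have := hC.2.1
      rw [pair_add_left, pair_add_right, pair_add_right, hQ.2.1, hE.1, pair_comm E] at this
      linarith
    refine ⟨E, ⟨hE, ?_⟩, add_sub_cancel_right Q E, rfl⟩
    rw [pair_add_left, hQE, hE.1]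
    norm_num
  · rintro ⟨E, hE, rfl, rfl⟩
    refine ⟨⟨hnef E hE, ?_, ?_⟩, hE.1, sub_add_cancel C E⟩
    · rw [pair_sub_left, pair_sub_right, pair_sub_right, pair_comm E C, hC.2.1, hE.2, hE.1.1]
      norm_num
    · rw [pair_sub_right, hC.2.2, hE.1.2]
      norm_num

lemma TwistedCubic.ncard_orthExceptional (h3 : 3 ≤ r) (h8 : r ≤ 8) {C : Λ r}
    (hC : TwistedCubic C) : (orthExceptional C).ncard = r :=
  hC.induction_on h3 h8 (P := fun D => (orthExceptional D).ncard = r)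
    ncard_orthExceptional_lineClass fun c D hc hK hD => by
      rw [orthExceptional_reflect hc hK,
        Set.ncard_image_of_injective _ (reflect_involutive hc).injective, hD]

lemma TwistedCubic.nef_sub_of_mem_orthExceptional (h3 : 3 ≤ r) (h8 : r ≤ 8) {C : Λ r}
    (hC : TwistedCubic C) : ∀ E ∈ orthExceptional C, Nef (C - E) := by
  refine hC.induction_on h3 h8 (P := fun D => ∀ E ∈ orthExceptional D, Nef (D - E)) ?_ ?_
  · rw [orthExceptional_lineClass]
    rintro _ ⟨i, rfl⟩
    exact nef_lineClass_sub_blowupClass h8 i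
  · intro c D hc hK hD
    rw [orthExceptional_reflect hc hK]
    rintro _ ⟨E, hE, rfl⟩
    rw [← reflect_sub]
    exact nef_reflect hc hK (hD E hE)

end

/-- For `3 ≤ r ≤ 8` and a twisted cubic `C` in `Λ_r`, there are exactly `r`
exceptional classes `E` with `⟨C, E⟩ = 0`; equivalently, exactly `r` pairs
`(Q, E)` with `Q` a conic, `E` exceptional and `Q + E = C`. -/
theorem twistedCubic_decompositions (r : ℕ) (h3 : 3 ≤ r) (h8 : r ≤ 8)
    (C : Fin (r + 1) → ℤ) (hC : TwistedCubic C) :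
    {E : Fin (r + 1) → ℤ | Exceptional E ∧ pair C E = 0}.ncard = r ∧
    {p : (Fin (r + 1) → ℤ) × (Fin (r + 1) → ℤ) |
        Conic p.1 ∧ Exceptional p.2 ∧ p.1 + p.2 = C}.ncard = r := by
  have hcount := hC.ncard_orthExceptional h3 h8
  refine ⟨hcount, ?_⟩
  rw [conicDecompositions_eq_image hC (hC.nef_sub_of_mem_orthExceptional h3 h8),
    Set.ncard_image_of_injective _ fun _ _ h => congrArg Prod.snd h, hcount]
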